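/- The maximum pointwise gap of the McCormick relaxation over the box [x_L,x_U] × [y_L,y_U] equals (x_U − x_L)(y_U − y_L)/4; that is, for any (x,y) in the box, any p satisfying the McCormick inequalities satisfies |p − xy| ≤ (x_U − x_L)(y_U − y_L)/4. -/

import Mathlib

/-!
The McCormick inequalities say exactly that `p - x y` lies between
`-min ((x - xL) (y - yL)) ((xU - x) (yU - y))` and `min ((x - xL) (yU - y)) ((xU - x) (y - yL))`.
The square of either minimum is at most the product of its two arguments, which is
`(x - xL)(xU - x) · (y - yL)(yU - y)`, and by AM-GM this is at most `((xU - xL)(yU - yL) / 4)²`.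
-/

theorem min_mul_le_add_mul_add_div_four {α : Type*} [Field α] [LinearOrder α]
    [IsStrictOrderedRing α] {a b c d : α}
    (ha : 0 ≤ a) (hb : 0 ≤ b) (hc : 0 ≤ c) (hd : 0 ≤ d) :
    min (a * d) (b * c) ≤ (a + b) * (c + d) / 4 := by
  set m := min (a * d) (b * c)
  have hm : 0 ≤ m := le_min (mul_nonneg ha hd) (mul_nonneg hb hc)
  have hab : 4 * a * b ≤ (a + b) ^ 2 := four_mul_le_sq_add a b
  have hcd : 4 * c * d ≤ (c + d) ^ 2 := four_mul_le_sq_add c d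
  have hsq : m * m ≤ ((a + b) * (c + d) / 4) * ((a + b) * (c + d) / 4) :=
    calc m * m ≤ (a * d) * (b * c) :=
          mul_le_mul (min_le_left _ _) (min_le_right _ _) hm (mul_nonneg ha hd)
      _ = (4 * a * b) * (4 * c * d) / 16 := by ring
      _ ≤ (a + b) ^ 2 * (c + d) ^ 2 / 16 := by gcongr
      _ = ((a + b) * (c + d) / 4) * ((a + b) * (c + d) / 4) := by ring
  exact nonneg_le_nonneg_of_sq_le_sq (by positivity) hsq

theorem mccormick_gap_bound_general (x y xL xU yL yU p : ℝ)
    (hx1 : xL ≤ x) (hx2 : x ≤ xU) (hy1 : yL ≤ y) (hy2 : y ≤ yU)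
    (h1 : p ≥ xL * y + yL * x - xL * yL)
    (h2 : p ≥ xU * y + yU * x - xU * yU)
    (h3 : p ≤ xL * y + yU * x - xL * yU)
    (h4 : p ≤ xU * y + yL * x - xU * yL) :
    |p - x * y| ≤ (xU - xL) * (yU - yL) / 4 := by
  have hx1' : 0 ≤ x - xL := sub_nonneg.2 hx1
  have hx2' : 0 ≤ xU - x := sub_nonneg.2 hx2
  have hy1' : 0 ≤ y - yL := sub_nonneg.2 hy1
  have hy2' : 0 ≤ yU - y := sub_nonneg.2 hy2
  rw [abs_sub_le_iff]
  constructor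
  · calc p - x * y ≤ min ((x - xL) * (yU - y)) ((xU - x) * (y - yL)) :=
          le_min (by linarith) (by linarith)
      _ ≤ _ := (min_mul_le_add_mul_add_div_four hx1' hx2' hy1' hy2').trans_eq (by ring)
  · calc x * y - p ≤ min ((x - xL) * (y - yL)) ((xU - x) * (yU - y)) :=
          le_min (by linarith) (by linarith)
      _ ≤ _ := (min_mul_le_add_mul_add_div_four hx1' hx2' hy2' hy1').trans_eq (by ring)

theorem mccormick_gap_bound (x y xL xU yL yU p : ℝ)
    (hxLU : xL < xU) (hyLU : yL < yU)
    (hx1 : xL ≤ x) (hx2 : x ≤ xU) (hy1 : yL ≤ y) (hy2 : y ≤ yU)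
    (h1 : p ≥ xL * y + yL * x - xL * yL)
    (h2 : p ≥ xU * y + yU * x - xU * yU)
    (h3 : p ≤ xL * y + yU * x - xL * yU)
    (h4 : p ≤ xU * y + yL * x - xU * yL) :
    |p - x * y| ≤ (xU - xL) * (yU - yL) / 4 :=
  mccormick_gap_bound_general x y xL xU yL yU p hx1 hx2 hy1 hy2 h1 h2 h3 h4
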